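/- For every budgeted fair-division instance with two agents, there exists a budget-feasible allocation Y that is EFx with respect to budgets and satisfies NSW(Y) ≥ √(1/2)·NSW(OPT), where OPT is a budget-feasible allocation maximizing the Nash social welfare. -/
import Mathlib


/-!
STATEMENT 3: For every budgeted fair-division instance with two agents, there exists a
budget-feasible allocation Y that is EFx w.r.t. budgets with NSW(Y) ≥ √(1/2)·NSW(OPT),
where OPT is a budget-feasible allocation maximizing the Nash social welfare.
-/

open Finset

variable {G : Type*}

/-- Total of an additive function over a bundle. -/
def tot (f : G → ℝ) (S : Finset G) : ℝ := ∑ g ∈ S, f g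

/-- `X` is a budget-feasible allocation of (a subset of) the goods in `M`. -/
def IsAlloc {n : ℕ} (M : Finset G) (c : G → ℝ) (B : Fin n → ℝ)
    (X : Fin n → Finset G) : Prop :=
  (∀ i, X i ⊆ M) ∧ (∀ i j, i ≠ j → Disjoint (X i) (X j)) ∧ (∀ i, tot c (X i) ≤ B i)

/-- EFx with respect to budgets. -/
def IsEFx [DecidableEq G] {n : ℕ} (c : G → ℝ) (B : Fin n → ℝ) (v : Fin n → G → ℝ)
    (X : Fin n → Finset G) : Prop :=
  ∀ i j, ∀ S ⊆ X j, tot c S ≤ B i → ∀ g ∈ S, tot (v i) (S.erase g) ≤ tot (v i) (X i)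

/-- Nash social welfare of an `n`-agent allocation. -/
noncomputable def NSW {n : ℕ} (v : Fin n → G → ℝ) (X : Fin n → Finset G) : ℝ :=
  (∏ i, tot (v i) (X i)) ^ ((1 : ℝ) / n)

/- ### Auxiliary lemmas -/

lemma tot_nonneg {f : G → ℝ} {S : Finset G} (h : ∀ g ∈ S, 0 ≤ f g) : 0 ≤ tot f S :=
  Finset.sum_nonneg h

lemma tot_mono [DecidableEq G] {f : G → ℝ} {S T : Finset G} (hST : S ⊆ T)
    (h : ∀ g ∈ T, 0 ≤ f g) : tot f S ≤ tot f T :=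
  Finset.sum_le_sum_of_subset_of_nonneg hST (fun g hg _ => h g hg)

/-- Every set with property `P` contains a subset with property `P` all of whose
single-element deletions fail `P`. -/
lemma exists_min_sub [DecidableEq G] (P : Finset G → Prop) :
    ∀ R : Finset G, P R → ∃ S, S ⊆ R ∧ P S ∧ ∀ h ∈ S, ¬ P (S.erase h) := by
  intro R
  induction R using Finset.strongInduction with
  | _ R ih =>
    intro hR
    by_cases h : ∃ h₀ ∈ R, P (R.erase h₀)
    · obtain ⟨h₀, hh₀, hPe⟩ := h
      obtain ⟨S, hS1, hS2, hS3⟩ := ih (R.erase h₀) (Finset.erase_ssubset hh₀) hPe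
      exact ⟨S, hS1.trans (Finset.erase_subset _ _), hS2, hS3⟩
    · push_neg at h
      exact ⟨R, Finset.Subset.refl R, hR, h⟩

/-- The key construction: given two disjoint budget-feasible bundles `X1, X2` and an
EFx-envy witness of agent 1 (valuation `v1`, budget `B1`) against `X2`, there is a pair
of bundles that is mutually EFx-free and whose product is at least half of
`v1(X1) * v2(X2)`. -/
lemma main_construct [DecidableEq G] (M : Finset G) (c v1 v2 : G → ℝ) (B1 B2 : ℝ)
    (X1 X2 : Finset G)
    (hC : ∀ g ∈ M, 0 ≤ c g) (hV1 : ∀ g ∈ M, 0 ≤ v1 g) (hV2 : ∀ g ∈ M, 0 ≤ v2 g)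
    (hX1 : X1 ⊆ M) (hX2 : X2 ⊆ M) (hd : Disjoint X1 X2)
    (hB1 : tot c X1 ≤ B1) (hB2 : tot c X2 ≤ B2)
    (henvy : ∃ T, T ⊆ X2 ∧ tot c T ≤ B1 ∧ ∃ g ∈ T, tot v1 X1 < tot v1 (T.erase g)) :
    ∃ Y1 Y2 : Finset G, Y1 ⊆ M ∧ Y2 ⊆ M ∧ Disjoint Y1 Y2 ∧
      tot c Y1 ≤ B1 ∧ tot c Y2 ≤ B2 ∧
      (∀ T ⊆ Y2, tot c T ≤ B1 → ∀ g ∈ T, tot v1 (T.erase g) ≤ tot v1 Y1) ∧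
      (∀ T ⊆ Y1, tot c T ≤ B2 → ∀ g ∈ T, tot v2 (T.erase g) ≤ tot v2 Y2) ∧
      tot v1 X1 * tot v2 X2 ≤ 2 * (tot v1 Y1 * tot v2 Y2) := by
  classical
  set a := tot v1 X1 with ha_def
  set b := tot v2 X2 with hb_def
  have ha : 0 ≤ a := tot_nonneg (fun g hg => hV1 g (hX1 hg))
  have hb : 0 ≤ b := tot_nonneg (fun g hg => hV2 g (hX2 hg))
  -- extract a rich set R0 and a minimal rich subset S
  obtain ⟨T0, hT0X2, hT0B, g0, hg0, hg0v⟩ := henvy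
  have hR0X2 : T0.erase g0 ⊆ X2 := (Finset.erase_subset _ _).trans hT0X2
  have hR0B : tot c (T0.erase g0) ≤ B1 :=
    le_trans (tot_mono (Finset.erase_subset _ _) (fun g hg => hC g (hX2 (hT0X2 hg)))) hT0B
  obtain ⟨S, hSR0, hSrich, hSmin⟩ := exists_min_sub (fun V => a < tot v1 V) _ hg0v
  have hSX2 : S ⊆ X2 := hSR0.trans hR0X2
  have hSM : S ⊆ M := hSX2.trans hX2
  have hSB1 : tot c S ≤ B1 :=
    le_trans (tot_mono hSR0 (fun g hg => hC g (hX2 (hR0X2 hg)))) hR0B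
  have hSB2 : tot c S ≤ B2 :=
    le_trans (tot_mono hSX2 (fun g hg => hC g (hX2 hg))) hB2
  set σ := tot v2 S with hσ_def
  have hσ0 : 0 ≤ σ := tot_nonneg (fun g hg => hV2 g (hSM hg))
  by_cases hcase : b ≤ 2 * σ
  · -- case 2σ ≥ b
    by_cases hH : ∀ T ⊆ X1, tot c T ≤ B2 → ∀ h ∈ T, tot v2 (T.erase h) ≤ σ
    · -- output (X1, S)
      refine ⟨X1, S, hX1, hSM, ?_, hB1, hSB2, ?_, hH, ?_⟩
      · exact hd.mono_right hSX2
      · intro T hTS _ g hg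
        have h1 : tot v1 (T.erase g) ≤ tot v1 (S.erase g) :=
          tot_mono (Finset.erase_subset_erase g hTS)
            (fun x hx => hV1 x (hSM (Finset.erase_subset _ _ hx)))
        have h2 : tot v1 (S.erase g) ≤ a := not_lt.mp (hSmin g (hTS hg))
        exact le_trans h1 h2
      · nlinarith
    · -- a beater P exists; output (S, P)
      push_neg at hH
      obtain ⟨T', hT'X1, hT'B2, h', hh', hh'v⟩ := hH
      have hPX1 : T'.erase h' ⊆ X1 := (Finset.erase_subset _ _).trans hT'X1
      have hPM : T'.erase h' ⊆ M := hPX1.trans hX1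
      have hPB2 : tot c (T'.erase h') ≤ B2 :=
        le_trans (tot_mono (Finset.erase_subset _ _)
          (fun g hg => hC g (hX1 (hT'X1 hg)))) hT'B2
      have hPv2 : 0 ≤ tot v2 (T'.erase h') := tot_nonneg (fun g hg => hV2 g (hPM hg))
      refine ⟨S, T'.erase h', hSM, hPM, ?_, hSB1, hPB2, ?_, ?_, ?_⟩
      · exact hd.symm.mono hSX2 hPX1
      · intro T hTP _ g hg
        have h1 : tot v1 (T.erase g) ≤ tot v1 (T'.erase h') :=
          tot_mono ((Finset.erase_subset _ _).trans hTP)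
            (fun x hx => hV1 x (hPM hx))
        have h2 : tot v1 (T'.erase h') ≤ a :=
          tot_mono hPX1 (fun x hx => hV1 x (hX1 hx))
        exact le_trans h1 (le_trans h2 (le_of_lt hSrich))
      · intro T hTS _ h hh
        have h1 : tot v2 (T.erase h) ≤ σ :=
          tot_mono ((Finset.erase_subset _ _).trans hTS)
            (fun x hx => hV2 x (hSM hx))
        exact le_trans h1 (le_of_lt hh'v)
      · nlinarith
  · -- case 2σ < b : argmax over 𝒢
    push_neg at hcase
    set 𝒢 : Finset (Finset G) :=
      X2.powerset.filter (fun A => tot c A ≤ B1 ∧ a < tot v1 A ∧ 2 * tot v2 A ≤ b) with h𝒢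
    have hS𝒢 : S ∈ 𝒢 := by
      rw [h𝒢, Finset.mem_filter, Finset.mem_powerset]
      exact ⟨hSX2, hSB1, hSrich, le_of_lt hcase⟩
    obtain ⟨A, hA𝒢, hAmax⟩ := 𝒢.exists_max_image (fun A => tot v1 A) ⟨S, hS𝒢⟩
    rw [h𝒢, Finset.mem_filter, Finset.mem_powerset] at hA𝒢
    obtain ⟨hAX2, hAB1, hArich, hAv2⟩ := hA𝒢
    have hAM : A ⊆ M := hAX2.trans hX2
    have hv1A0 : 0 ≤ tot v1 A := le_trans ha (le_of_lt hArich)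
    have hsdiff : tot v2 (X2 \ A) + tot v2 A = b := Finset.sum_sdiff hAX2
    by_cases hE1 : ∀ T ⊆ X2 \ A, tot c T ≤ B1 → ∀ g ∈ T, tot v1 (T.erase g) ≤ tot v1 A
    · -- output (A, X2 \ A)
      refine ⟨A, X2 \ A, hAM, (Finset.sdiff_subset).trans hX2, Finset.disjoint_sdiff,
        hAB1, ?_, hE1, ?_, ?_⟩
      · exact le_trans (tot_mono Finset.sdiff_subset (fun g hg => hC g (hX2 hg))) hB2
      · intro T hTA _ h hh
        have h1 : tot v2 (T.erase h) ≤ tot v2 A :=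
          tot_mono ((Finset.erase_subset _ _).trans hTA) (fun x hx => hV2 x (hAM hx))
        have h2 : tot v2 A ≤ tot v2 (X2 \ A) := by linarith
        exact le_trans h1 h2
      · nlinarith
    · -- minimal beater W ; output (A, W)
      push_neg at hE1
      obtain ⟨T1, hT1sub, hT1B, g1, hg1, hg1v⟩ := hE1
      have hR1sub : T1.erase g1 ⊆ X2 \ A := (Finset.erase_subset _ _).trans hT1sub
      have hR1B : tot c (T1.erase g1) ≤ B1 :=
        le_trans (tot_mono (Finset.erase_subset _ _)
          (fun g hg => hC g (hX2 ((hT1sub.trans Finset.sdiff_subset) hg)))) hT1B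
      obtain ⟨W, hWR1, hWrich, hWmin⟩ :=
        exists_min_sub (fun V => tot v1 A < tot v1 V) _ hg1v
      have hWsub : W ⊆ X2 \ A := hWR1.trans hR1sub
      have hWX2 : W ⊆ X2 := hWsub.trans Finset.sdiff_subset
      have hWM : W ⊆ M := hWX2.trans hX2
      have hWB1 : tot c W ≤ B1 :=
        le_trans (tot_mono hWR1 (fun g hg => hC g (hX2 ((hR1sub.trans Finset.sdiff_subset) hg)))) hR1B
      have hWB2 : tot c W ≤ B2 :=
        le_trans (tot_mono hWX2 (fun g hg => hC g (hX2 hg))) hB2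
      have hWv2 : b < 2 * tot v2 W := by
        by_contra hcon
        push_neg at hcon
        have hW𝒢 : W ∈ 𝒢 := by
          rw [h𝒢, Finset.mem_filter, Finset.mem_powerset]
          exact ⟨hWX2, hWB1, lt_trans hArich hWrich, hcon⟩
        exact absurd (hAmax W hW𝒢) (not_le.mpr hWrich)
      refine ⟨A, W, hAM, hWM, ?_, hAB1, hWB2, ?_, ?_, ?_⟩
      · exact (Finset.disjoint_sdiff.mono_right hWsub)
      · intro T hTW _ g hg
        have h1 : tot v1 (T.erase g) ≤ tot v1 (W.erase g) :=
          tot_mono (Finset.erase_subset_erase g hTW)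
            (fun x hx => hV1 x (hWM (Finset.erase_subset _ _ hx)))
        exact le_trans h1 (not_lt.mp (hWmin g (hTW hg)))
      · intro T hTA _ h hh
        have h1 : tot v2 (T.erase h) ≤ tot v2 A :=
          tot_mono ((Finset.erase_subset _ _).trans hTA) (fun x hx => hV2 x (hAM hx))
        have h2 : tot v2 A ≤ tot v2 W := by linarith
        exact le_trans h1 h2
      · nlinarith

/-- Self-EFx: an agent never EFx-envies her own bundle (nonneg values). -/
lemma self_efx [DecidableEq G] {M : Finset G} {v : G → ℝ} {Y : Finset G}
    (hYM : Y ⊆ M) (hv : ∀ g ∈ M, 0 ≤ v g) :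
    ∀ T ⊆ Y, ∀ g ∈ T, tot v (T.erase g) ≤ tot v Y := by
  intro T hTY g _
  exact tot_mono ((Finset.erase_subset _ _).trans hTY) (fun x hx => hv x (hYM hx))

/-- NSW glue: product halving transfers to NSW with factor √(1/2). -/
lemma nsw_glue (p q : ℝ) (hp : 0 ≤ p) (hq : 0 ≤ q) (h : p ≤ 2 * q) :
    Real.sqrt (1 / 2) * p ^ ((1 : ℝ) / 2) ≤ q ^ ((1 : ℝ) / 2) := by
  have h1 : Real.sqrt (1 / 2) = (1 / 2 : ℝ) ^ ((1 : ℝ) / 2) := Real.sqrt_eq_rpow _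
  rw [h1, ← Real.mul_rpow (by norm_num) hp]
  exact Real.rpow_le_rpow (by linarith) (by linarith) (by norm_num)

theorem efx_two_agents_nsw [DecidableEq G] (M : Finset G) (c : G → ℝ) (B : Fin 2 → ℝ)
    (v : Fin 2 → G → ℝ)
    (hc : ∀ g ∈ M, 0 ≤ c g) (hB : ∀ i, 0 ≤ B i) (hv : ∀ i, ∀ g ∈ M, 0 ≤ v i g)
    (OPT : Fin 2 → Finset G) (hOPT : IsAlloc M c B OPT)
    (hOPTmax : ∀ X : Fin 2 → Finset G, IsAlloc M c B X → NSW v X ≤ NSW v OPT) :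
    ∃ Y : Fin 2 → Finset G, IsAlloc M c B Y ∧ IsEFx c B v Y ∧
      Real.sqrt (1 / 2) * NSW v OPT ≤ NSW v Y := by
  classical
  obtain ⟨hOM, hOd, hOB⟩ := hOPT
  have h01 : (0 : Fin 2) ≠ 1 := by decide
  -- nonnegativity of OPT totals
  have hx0 : 0 ≤ tot (v 0) (OPT 0) := tot_nonneg (fun g hg => hv 0 g (hOM 0 hg))
  have hx1 : 0 ≤ tot (v 1) (OPT 1) := tot_nonneg (fun g hg => hv 1 g (hOM 1 hg))
  -- NSW of a 2-agent allocation
  have hNSW : ∀ X : Fin 2 → Finset G, NSW v X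
      = (tot (v 0) (X 0) * tot (v 1) (X 1)) ^ ((1 : ℝ) / 2) := by
    intro X
    unfold NSW
    rw [Fin.prod_univ_two]
    norm_num
  by_cases hE0 : ∀ S ⊆ OPT 1, tot c S ≤ B 0 → ∀ g ∈ S,
      tot (v 0) (S.erase g) ≤ tot (v 0) (OPT 0)
  · by_cases hE1 : ∀ S ⊆ OPT 0, tot c S ≤ B 1 → ∀ g ∈ S,
        tot (v 1) (S.erase g) ≤ tot (v 1) (OPT 1)
    · -- OPT itself is EFx
      refine ⟨OPT, ⟨hOM, hOd, hOB⟩, ?_, ?_⟩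
      · intro i j S hS hc' g hg
        fin_cases i <;> fin_cases j
        · exact self_efx (hOM 0) (hv 0) S hS g hg
        · exact hE0 S hS hc' g hg
        · exact hE1 S hS hc' g hg
        · exact self_efx (hOM 1) (hv 1) S hS g hg
      · have hnn : 0 ≤ NSW v OPT := by
          rw [hNSW]
          exact Real.rpow_nonneg (mul_nonneg hx0 hx1) _
        have hs : Real.sqrt (1 / 2) ≤ 1 := by
          rw [show (1 : ℝ) = Real.sqrt 1 by simp]
          exact Real.sqrt_le_sqrt (by norm_num)
        nlinarith
    · -- agent 1 (index 1) envies agent 0's bundle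
      push_neg at hE1
      obtain ⟨T, hT, hTc, g, hg, hgv⟩ := hE1
      obtain ⟨Y1, Y2, hY1M, hY2M, hYd, hY1B, hY2B, hcross1, hcross2, hprod⟩ :=
        main_construct M c (v 1) (v 0) (B 1) (B 0) (OPT 1) (OPT 0)
          hc (hv 1) (hv 0) (hOM 1) (hOM 0) (hOd 1 0 h01.symm)
          (hOB 1) (hOB 0) ⟨T, hT, hTc, g, hg, hgv⟩
      -- agent 0 gets Y2, agent 1 gets Y1
      refine ⟨![Y2, Y1], ⟨?_, ?_, ?_⟩, ?_, ?_⟩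
      · intro i; fin_cases i
        · simpa using hY2M
        · simpa using hY1M
      · intro i j hij; fin_cases i <;> fin_cases j
        · exact absurd rfl hij
        · simpa using hYd.symm
        · simpa using hYd
        · exact absurd rfl hij
      · intro i; fin_cases i
        · simpa using hY2B
        · simpa using hY1B
      · intro i j S hS hc' g' hg'
        fin_cases i <;> fin_cases j
        · simp only [Matrix.cons_val_zero] at hS ⊢
          exact self_efx hY2M (hv 0) S hS g' hg'
        · simp only [Matrix.cons_val_zero, Matrix.cons_val_one, Matrix.head_cons] at hS ⊢
          exact hcross2 S hS hc' g' hg'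
        · simp only [Matrix.cons_val_zero, Matrix.cons_val_one, Matrix.head_cons] at hS ⊢
          exact hcross1 S hS hc' g' hg'
        · simp only [Matrix.cons_val_one, Matrix.head_cons] at hS ⊢
          exact self_efx hY1M (hv 1) S hS g' hg'
      · rw [hNSW, hNSW]
        simp only [Matrix.cons_val_zero, Matrix.cons_val_one, Matrix.head_cons]
        have hq : 0 ≤ tot (v 0) Y2 * tot (v 1) Y1 := by
          have h1 := tot_nonneg (fun x hx => hv 0 x (hY2M hx))
          have h2 := tot_nonneg (fun x hx => hv 1 x (hY1M hx))
          exact mul_nonneg h1 h2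
        refine nsw_glue _ _ (mul_nonneg hx0 hx1) hq ?_
        nlinarith [hprod]
  · -- agent 0 envies agent 1's bundle
    push_neg at hE0
    obtain ⟨T, hT, hTc, g, hg, hgv⟩ := hE0
    obtain ⟨Y1, Y2, hY1M, hY2M, hYd, hY1B, hY2B, hcross1, hcross2, hprod⟩ :=
      main_construct M c (v 0) (v 1) (B 0) (B 1) (OPT 0) (OPT 1)
        hc (hv 0) (hv 1) (hOM 0) (hOM 1) (hOd 0 1 h01)
        (hOB 0) (hOB 1) ⟨T, hT, hTc, g, hg, hgv⟩
    refine ⟨![Y1, Y2], ⟨?_, ?_, ?_⟩, ?_, ?_⟩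
    · intro i; fin_cases i
      · simpa using hY1M
      · simpa using hY2M
    · intro i j hij; fin_cases i <;> fin_cases j
      · exact absurd rfl hij
      · simpa using hYd
      · simpa using hYd.symm
      · exact absurd rfl hij
    · intro i; fin_cases i
      · simpa using hY1B
      · simpa using hY2B
    · intro i j S hS hc' g' hg'
      fin_cases i <;> fin_cases j
      · simp only [Matrix.cons_val_zero] at hS ⊢
        exact self_efx hY1M (hv 0) S hS g' hg'
      · simp only [Matrix.cons_val_zero, Matrix.cons_val_one, Matrix.head_cons] at hS ⊢
        exact hcross1 S hS hc' g' hg'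
      · simp only [Matrix.cons_val_zero, Matrix.cons_val_one, Matrix.head_cons] at hS ⊢
        exact hcross2 S hS hc' g' hg'
      · simp only [Matrix.cons_val_one, Matrix.head_cons] at hS ⊢
        exact self_efx hY2M (hv 1) S hS g' hg'
    · rw [hNSW, hNSW]
      simp only [Matrix.cons_val_zero, Matrix.cons_val_one, Matrix.head_cons]
      have hq : 0 ≤ tot (v 0) Y1 * tot (v 1) Y2 := by
        have h1 := tot_nonneg (fun x hx => hv 0 x (hY1M hx))
        have h2 := tot_nonneg (fun x hx => hv 1 x (hY2M hx))
        exact mul_nonneg h1 h2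
      exact nsw_glue _ _ (mul_nonneg hx0 hx1) hq hprod
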